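/- arXiv:1711.05037 — 4 statements merged into one kernel-verified Lean document; each statement's English description precedes it below -/
import Mathlib

section
/- Assume (h_k(x) − y)^2 ≤ M for all k ∈ [p] and all (x,y) ∈ 𝒳 × 𝒴. For every (x,y) the squared loss of the distribution weighted combination decomposes as (h_z^η(x) − y)^2 = f_z(x,y) − g_z(x), where f_z(x,y) = (h_z^η(x) − y)^2 − 2M log K_z(x) and g_z(x) = −2M log K_z(x), and for every fixed (x,y) both z ↦ f_z(x,y) and z ↦ g_z(x) are convex functions of z on the simplex Δ. -/
open Finset Real

/-- Marginal distribution on `X` of a joint distribution on `X × Y`. -/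
noncomputable def marginal {X Y : Type*} [Fintype Y] (D : X → Y → ℝ) (x : X) : ℝ :=
  ∑ y, D x y

/-- Expected loss `𝓛(D, h) = Σ_{(x,y)} D(x,y) L(h(x), y)`. -/
noncomputable def expLoss {X Y : Type*} [Fintype X] [Fintype Y]
    (L : ℝ → ℝ → ℝ) (yval : Y → ℝ) (D : X → Y → ℝ) (h : X → ℝ) : ℝ :=
  ∑ x, ∑ y, D x y * L (h x) (yval y)

/-- The uniform distribution value `𝒰(x) = 1/|X|` on a finite set `X`. -/
noncomputable def unif (X : Type*) [Fintype X] : ℝ :=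
  (Fintype.card X : ℝ)⁻¹

/-- The distribution weighted combining rule `h_z^η`. -/
noncomputable def combRule {X Y : Type*} [Fintype X] [Fintype Y] {p : ℕ}
    (D : Fin p → X → Y → ℝ) (h : Fin p → X → ℝ) (η : ℝ) (z : Fin p → ℝ) (x : X) : ℝ :=
  ∑ k, ((z k * marginal (D k) x + η * unif X / (p : ℝ)) /
        ((∑ j, z j * marginal (D j) x) + η * unif X)) * h k x

/-- Exponentiated Rényi divergence `d_α(D ∥ D')` of joint distributions. -/
noncomputable def renyi {X Y : Type*} [Fintype X] [Fintype Y] (α : ℝ)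
    (D D' : X → Y → ℝ) : ℝ :=
  (∑ x, ∑ y, D x y ^ α / D' x y ^ (α - 1)) ^ (α - 1)⁻¹

/-- Exponentiated Rényi divergence of distributions on `Y`. -/
noncomputable def renyiY {Y : Type*} [Fintype Y] (α : ℝ) (q q' : Y → ℝ) : ℝ :=
  (∑ y, q y ^ α / q' y ^ (α - 1)) ^ (α - 1)⁻¹

/-!
Along a segment of the simplex, both `K_z(x)` and
`u_z = K_z(x) (h_z^η(x) - y) = Σ_k (z_k 𝒟_k(x) + η 𝒰(x) / p) (h_k(x) - y)` are affine in `z`, and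
Cauchy–Schwarz with the nonnegative weights `z_k 𝒟_k(x) + η 𝒰(x) / p` turns the loss bound into
`u² ≤ M K²`. Under that bound the second derivative of `(u / K)² - 2 M log K` along a line is
nonnegative, so `f_z` is convex; `g_z` is convex because `log` is concave and `M ≥ 0`.
-/

open Set AffineMap

lemma sq_sum_mul_le_mul_sq_sum {ι : Type*} (s : Finset ι) {c v : ι → ℝ} {M : ℝ}
    (hc : ∀ i ∈ s, 0 ≤ c i) (hv : ∀ i ∈ s, v i ^ 2 ≤ M) :
    (∑ i ∈ s, c i * v i) ^ 2 ≤ M * (∑ i ∈ s, c i) ^ 2 := by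
  have hCS := sum_sq_le_sum_mul_sum_of_sq_le_mul s hc
    (r := fun i => c i * v i) (g := fun i => M * c i)
    (fun i hi => mul_nonneg ((sq_nonneg _).trans (hv i hi)) (hc i hi))
    (fun i hi => by nlinarith [hv i hi, hc i hi, mul_nonneg (hc i hi) (hc i hi)])
  rwa [← mul_sum, mul_left_comm, ← sq] at hCS

lemma convexOn_of_convexOn_comp_lineMap {𝕜 E β : Type*} [Field 𝕜] [LinearOrder 𝕜]
    [IsStrictOrderedRing 𝕜] [AddCommGroup E] [Module 𝕜 E] [AddCommMonoid β] [PartialOrder β]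
    [Module 𝕜 β] {S : Set E} {f : E → β} (hS : Convex 𝕜 S)
    (hf : ∀ x ∈ S, ∀ y ∈ S, ConvexOn 𝕜 (Icc (0 : 𝕜) 1) (f ∘ lineMap x y)) :
    ConvexOn 𝕜 S f := by
  refine ⟨hS, fun x hx y hy a b ha hb hab => ?_⟩
  have key := (hf x hx y hy).2 (left_mem_Icc.2 zero_le_one) (right_mem_Icc.2 zero_le_one)
    ha hb hab
  obtain rfl : a = 1 - b := eq_sub_of_add_eq hab
  simpa [lineMap_apply_module] using key

lemma convexOn_sq_div_sub_log_real {D : Set ℝ} (hD : Convex ℝ D) (u K : ℝ →ᵃ[ℝ] ℝ) {M : ℝ}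
    (hK : ∀ t ∈ D, 0 < K t) (hu : ∀ t ∈ D, u t ^ 2 ≤ M * K t ^ 2) :
    ConvexOn ℝ D (fun t => (u t / K t) ^ 2 - 2 * M * log (K t)) := by
  set b := u.linear 1
  set d := K.linear 1
  have hu' : ∀ t, HasDerivAt u b t := fun t => u.hasDerivAt
  have hK' : ∀ t, HasDerivAt K d t := fun t => K.hasDerivAt
  apply convexOn_of_hasDerivWithinAt2_nonneg hD
    (f' := fun t => 2 * u t * (b * K t - u t * d) / K t ^ 3 - 2 * M * d / K t)
    (f'' := fun t => 2 * (b * K t - u t * d) * (b * K t - 3 * u t * d) / K t ^ 4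
      + 2 * M * d ^ 2 / K t ^ 2)
  · have hKne : ∀ t ∈ D, K t ≠ 0 := fun t ht => (hK t ht).ne'
    exact ((u.continuous_of_finiteDimensional.continuousOn.div
      K.continuous_of_finiteDimensional.continuousOn hKne).pow 2).sub
      (continuousOn_const.mul (K.continuous_of_finiteDimensional.continuousOn.log hKne))
  · intro t ht
    have hKt := (hK t (interior_subset ht)).ne'
    refine ((((hu' t).div (hK' t) hKt).pow 2).sub
      (((hK' t).log hKt).const_mul (2 * M))).hasDerivWithinAt.congr_deriv ?_
    simp only [Pi.div_apply, Nat.cast_ofNat, Nat.add_one_sub_one, pow_one]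
    field_simp
  · intro t ht
    have hKt := (hK t (interior_subset ht)).ne'
    refine (((((hu' t).const_mul 2).mul (((hK' t).const_mul b).sub ((hu' t).mul_const d))).div
      ((hK' t).pow 3) (pow_ne_zero 3 hKt)).sub
      ((hasDerivAt_const t (2 * M * d)).div (hK' t) hKt)).hasDerivWithinAt.congr_deriv ?_
    simp only [Pi.mul_apply, Pi.sub_apply, Pi.pow_apply]
    field_simp
    ring
  · intro t ht
    have hKt := hK t (interior_subset ht)
    have hut := hu t (interior_subset ht)
    -- with `e = b K - u d`, the numerator is `e (e - 2 u d) + M d² K² = (e - u d)² + d² (M K² - u²)`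
    have hnum : 0 ≤ (b * K t - u t * d) * (b * K t - 3 * u t * d) + M * d ^ 2 * K t ^ 2 := by
      nlinarith [sq_nonneg (b * K t - 2 * u t * d), mul_nonneg (sq_nonneg d) (sub_nonneg.2 hut)]
    have heq : 2 * (b * K t - u t * d) * (b * K t - 3 * u t * d) / K t ^ 4
        + 2 * M * d ^ 2 / K t ^ 2
        = 2 * ((b * K t - u t * d) * (b * K t - 3 * u t * d) + M * d ^ 2 * K t ^ 2) / K t ^ 4 := by
      field_simp
    rw [heq]
    positivity

section AffineDomain

variable {E : Type*} [AddCommGroup E] [Module ℝ E] {S : Set E}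

lemma convexOn_sq_div_sub_log (hS : Convex ℝ S) (u K : E →ᵃ[ℝ] ℝ) {M : ℝ}
    (hK : ∀ z ∈ S, 0 < K z) (hu : ∀ z ∈ S, u z ^ 2 ≤ M * K z ^ 2) :
    ConvexOn ℝ S (fun z => (u z / K z) ^ 2 - 2 * M * log (K z)) :=
  convexOn_of_convexOn_comp_lineMap hS fun x hx y hy =>
    convexOn_sq_div_sub_log_real (convex_Icc 0 1) (u.comp (lineMap x y)) (K.comp (lineMap x y))
      (fun _ ht => hK _ (hS.lineMap_mem hx hy ht)) (fun _ ht => hu _ (hS.lineMap_mem hx hy ht))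

lemma convexOn_neg_mul_log (hS : Convex ℝ S) (K : E →ᵃ[ℝ] ℝ) {c : ℝ} (hc : 0 ≤ c)
    (hK : ∀ z ∈ S, 0 < K z) :
    ConvexOn ℝ S (fun z => -(c * log (K z))) := by
  have hlog := (strictConcaveOn_log_Ioi.concaveOn.neg.smul hc).comp_affineMap K
  refine (hlog.subset (fun z hz => hK z hz) hS).congr fun z _ => ?_
  simp

end AffineDomain

lemma exists_affineMap_eq_sum_mul_add {ι : Type*} [Fintype ι] (a : ι → ℝ) (c : ℝ) :
    ∃ K : (ι → ℝ) →ᵃ[ℝ] ℝ, ∀ z, K z = ∑ i, z i * a i + c :=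
  ⟨(Fintype.linearCombination ℝ a).toAffineMap + AffineMap.const ℝ _ c,
    fun z => by simp [Fintype.linearCombination_apply]⟩

lemma sum_mul_add_div_eq {p : ℕ} (hp : p ≠ 0) (z a : Fin p → ℝ) (c : ℝ) :
    ∑ k, (z k * a k + c / p) = ∑ k, z k * a k + c := by
  rw [sum_add_distrib, sum_const, card_univ, Fintype.card_fin, nsmul_eq_mul]
  field_simp

lemma combRule_sub_eq_div {X Y : Type*} [Fintype X] [Fintype Y] {p : ℕ} (hp : p ≠ 0)
    (D : Fin p → X → Y → ℝ) (h : Fin p → X → ℝ) (η : ℝ) (z : Fin p → ℝ) (x : X) (v : ℝ)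
    (hK : ∑ k, z k * marginal (D k) x + η * unif X ≠ 0) :
    combRule D h η z x - v =
      (∑ k, (z k * marginal (D k) x + η * unif X / p) * (h k x - v)) /
        (∑ k, z k * marginal (D k) x + η * unif X) := by
  have hcomb : combRule D h η z x =
      (∑ k, (z k * marginal (D k) x + η * unif X / p) * h k x) /
        (∑ k, z k * marginal (D k) x + η * unif X) := by
    simp only [combRule, div_mul_eq_mul_div, sum_div]
  rw [hcomb, div_sub' hK, ← sum_mul_add_div_eq hp]
  simp only [mul_sub, sum_sub_distrib, ← sum_mul]

lemma exists_affineMap_combRule_sub_eq_div {X Y : Type*} [Fintype X] [Fintype Y] {p : ℕ}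
    (hp : 0 < p) (D : Fin p → X → Y → ℝ) (h : Fin p → X → ℝ) {η : ℝ} (hη : 0 < η) {M : ℝ}
    (x : X) (v : ℝ) (hD : ∀ k y, 0 ≤ D k x y) (hM : ∀ k, (h k x - v) ^ 2 ≤ M) :
    ∃ u K : (Fin p → ℝ) →ᵃ[ℝ] ℝ, (∀ z, K z = ∑ k, z k * marginal (D k) x + η * unif X) ∧
      ∀ z ∈ stdSimplex ℝ (Fin p),
        0 < K z ∧ u z ^ 2 ≤ M * K z ^ 2 ∧ combRule D h η z x - v = u z / K z := by
  set m : Fin p → ℝ := fun k => marginal (D k) x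
  set w : Fin p → ℝ := fun k => h k x - v
  obtain ⟨K, hK⟩ := exists_affineMap_eq_sum_mul_add m (η * unif X)
  obtain ⟨u, hu⟩ := exists_affineMap_eq_sum_mul_add (m * w) (η * unif X / p * ∑ k, w k)
  have hu' : ∀ z, u z = ∑ k, (z k * m k + η * unif X / p) * w k := fun z => by
    simp only [hu, Pi.mul_apply, add_mul, sum_add_distrib, mul_sum, mul_assoc]
  have hUpos : 0 < η * unif X :=
    mul_pos hη (inv_pos.2 (Nat.cast_pos.2 (Fintype.card_pos_iff.2 ⟨x⟩)))
  refine ⟨u, K, hK, fun z hz => ?_⟩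
  have hzm : ∀ k, 0 ≤ z k * m k := fun k => mul_nonneg (hz.1 k) (sum_nonneg fun y _ => hD k y)
  have hKpos : 0 < K z := by
    rw [hK]
    exact add_pos_of_nonneg_of_pos (sum_nonneg fun k _ => hzm k) hUpos
  refine ⟨hKpos, ?_, ?_⟩
  · rw [hu', hK, ← sum_mul_add_div_eq hp.ne']
    exact sq_sum_mul_le_mul_sq_sum _ (fun k _ => by have := hzm k; positivity) (fun k _ => hM k)
  · rw [hu', hK]
    exact combRule_sub_eq_div hp.ne' D h η z x v (hK z ▸ hKpos.ne')

theorem stmt5_general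
    {X Y : Type*} [Fintype X] [Fintype Y]
    {p : ℕ} (hp : 0 < p)
    (D : Fin p → X → Y → ℝ)
    (hDnonneg : ∀ k x y, 0 ≤ D k x y)
    (h : Fin p → X → ℝ) (yval : Y → ℝ)
    (η : ℝ) (hη : 0 < η)
    (M : ℝ)
    (hM : ∀ k x y, (h k x - yval y) ^ 2 ≤ M) :
    ∀ (x : X) (y : Y),
      (∀ z ∈ stdSimplex ℝ (Fin p),
        (combRule D h η z x - yval y) ^ 2 =
          ((combRule D h η z x - yval y) ^ 2 -
              2 * M * Real.log ((∑ k, z k * marginal (D k) x) + η * unif X)) -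
            (-(2 * M * Real.log ((∑ k, z k * marginal (D k) x) + η * unif X)))) ∧
      ConvexOn ℝ (stdSimplex ℝ (Fin p)) (fun z =>
        (combRule D h η z x - yval y) ^ 2 -
          2 * M * Real.log ((∑ k, z k * marginal (D k) x) + η * unif X)) ∧
      ConvexOn ℝ (stdSimplex ℝ (Fin p)) (fun z =>
        -(2 * M * Real.log ((∑ k, z k * marginal (D k) x) + η * unif X))) := by
  intro x y
  obtain ⟨u, K, hK, hKu⟩ := exists_affineMap_combRule_sub_eq_div hp D h hη x (yval y)
    (fun k => hDnonneg k x) (fun k => hM k x y)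
  have hS := convex_stdSimplex ℝ (Fin p)
  refine ⟨fun z _ => by ring, ?_, ?_⟩
  · refine (convexOn_sq_div_sub_log hS u K (fun z hz => (hKu z hz).1)
      (fun z hz => (hKu z hz).2.1)).congr fun z hz => ?_
    dsimp only
    rw [(hKu z hz).2.2, hK]
  · have hM0 : 0 ≤ 2 * M := mul_nonneg zero_le_two ((sq_nonneg _).trans (hM ⟨0, hp⟩ x y))
    refine (convexOn_neg_mul_log hS K hM0 fun z hz => (hKu z hz).1).congr fun z _ => ?_
    dsimp only
    rw [hK]

/-- Proposition (DC decomposition of the squared loss): for every `(x, y)`,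
`(h_z^η(x) − y)² = f_z(x,y) − g_z(x)` with
`f_z(x,y) = (h_z^η(x) − y)² − 2M log K_z(x)` and `g_z(x) = −2M log K_z(x)`,
and both `z ↦ f_z(x,y)` and `z ↦ g_z(x)` are convex on the simplex. -/
theorem stmt5
    {X Y : Type*} [Fintype X] [Nonempty X] [Fintype Y] [Nonempty Y]
    {p : ℕ} (hp : 0 < p)
    (D : Fin p → X → Y → ℝ)
    (hDnonneg : ∀ k x y, 0 ≤ D k x y)
    (hDsum : ∀ k, ∑ x, ∑ y, D k x y = 1)
    (h : Fin p → X → ℝ) (yval : Y → ℝ)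
    (η : ℝ) (hη : 0 < η)
    (M : ℝ)
    (hM : ∀ k x y, (h k x - yval y) ^ 2 ≤ M) :
    ∀ (x : X) (y : Y),
      (∀ z ∈ stdSimplex ℝ (Fin p),
        (combRule D h η z x - yval y) ^ 2 =
          ((combRule D h η z x - yval y) ^ 2 -
              2 * M * Real.log ((∑ k, z k * marginal (D k) x) + η * unif X)) -
            (-(2 * M * Real.log ((∑ k, z k * marginal (D k) x) + η * unif X)))) ∧
      ConvexOn ℝ (stdSimplex ℝ (Fin p)) (fun z =>
        (combRule D h η z x - yval y) ^ 2 -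
          2 * M * Real.log ((∑ k, z k * marginal (D k) x) + η * unif X)) ∧
      ConvexOn ℝ (stdSimplex ℝ (Fin p)) (fun z =>
        -(2 * M * Real.log ((∑ k, z k * marginal (D k) x) + η * unif X))) :=
  stmt5_general hp D hDnonneg h yval η hη M hM
end

section
/- Let D_T and D be probability distributions on the finite set 𝒳 × 𝒴 with D(x,y) > 0 wherever D_T(x,y) > 0, let h : 𝒳 → ℝ be any hypothesis with L(h(x), y) ≤ M for all (x,y), and let α > 1. Then 𝓛(D_T, h) ≤ [d_α(D_T ∥ D) · 𝓛(D, h)]^{(α−1)/α} · M^{1/α}. -/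
open Finset Real

/-! Hölder's inequality with weights `D · ℓ` applied to the likelihood ratio `D_T / D` gives
`𝓛(D_T, h) ≤ 𝓛(D, h)^{1 - 1/α} (Σ ℓ D_T^α / D^{α-1})^{1/α}`, and `ℓ ≤ M` bounds the last sum by
`M · d_α(D_T ∥ D)^{α-1}`. -/

namespace Real

variable {ι : Type*} {α : ℝ}

lemma mul_div_rpow_of_imp {a b : ℝ} (ha : 0 ≤ a) (hb : 0 ≤ b) (hab : b = 0 → a = 0)
    (hα : α ≠ 0) : b * (a / b) ^ α = a ^ α / b ^ (α - 1) := by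
  rcases hb.eq_or_lt with rfl | hb
  · simp [hab rfl, zero_rpow hα]
  · rw [div_rpow ha hb.le, rpow_sub_one hb.ne']
    field_simp

variable (s : Finset ι) {p q l : ι → ℝ}

theorem sum_mul_le_rpow_mul_sum_rpow_div_rpow (hp : ∀ i, 0 ≤ p i) (hq : ∀ i, 0 ≤ q i)
    (hpq : ∀ i, 0 < p i → 0 < q i) (hl : ∀ i, 0 ≤ l i) (hα : 1 ≤ α) :
    ∑ i ∈ s, p i * l i ≤
      (∑ i ∈ s, q i * l i) ^ (1 - α⁻¹) * (∑ i ∈ s, p i ^ α / q i ^ (α - 1) * l i) ^ α⁻¹ := by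
  have holder := inner_le_weight_mul_Lp_of_nonneg s hα (fun i ↦ q i * l i) (fun i ↦ p i / q i)
    (fun i ↦ mul_nonneg (hq i) (hl i)) (fun i ↦ div_nonneg (hp i) (hq i))
  have hqp : ∀ i, q i = 0 → p i = 0 := fun i hqi ↦
    le_antisymm (not_lt.1 fun hpi ↦ (hpq i hpi).ne' hqi) (hp i)
  have hlin : ∀ i, q i * l i * (p i / q i) = p i * l i := fun i ↦ by
    rw [mul_right_comm, mul_div_cancel_of_imp' (hqp i)]
  have hpow : ∀ i, q i * l i * (p i / q i) ^ α = p i ^ α / q i ^ (α - 1) * l i := fun i ↦ by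
    rw [mul_right_comm, mul_div_rpow_of_imp (hp i) (hq i) (hqp i) (by linarith)]
  simpa only [hlin, hpow] using holder

theorem sum_mul_le_renyi_mul_sum_mul_rpow {M : ℝ} (hp : ∀ i, 0 ≤ p i) (hq : ∀ i, 0 ≤ q i)
    (hpq : ∀ i, 0 < p i → 0 < q i) (hl : ∀ i, 0 ≤ l i) (hM0 : 0 ≤ M) (hM : ∀ i ∈ s, l i ≤ M)
    (hα : 1 < α) :
    ∑ i ∈ s, p i * l i ≤
      ((∑ i ∈ s, p i ^ α / q i ^ (α - 1)) ^ (α - 1)⁻¹ * ∑ i ∈ s, q i * l i) ^ ((α - 1) / α) *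
        M ^ α⁻¹ := by
  set S := ∑ i ∈ s, p i ^ α / q i ^ (α - 1)
  set E := ∑ i ∈ s, q i * l i
  have hratio : ∀ i, 0 ≤ p i ^ α / q i ^ (α - 1) := fun i ↦
    div_nonneg (rpow_nonneg (hp i) _) (rpow_nonneg (hq i) _)
  have hS : 0 ≤ S := Finset.sum_nonneg fun i _ ↦ hratio i
  have hE : 0 ≤ E := Finset.sum_nonneg fun i _ ↦ mul_nonneg (hq i) (hl i)
  have hα1 : α - 1 ≠ 0 := by linarith
  calc ∑ i ∈ s, p i * l i
      ≤ E ^ (1 - α⁻¹) * (∑ i ∈ s, p i ^ α / q i ^ (α - 1) * l i) ^ α⁻¹ :=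
        sum_mul_le_rpow_mul_sum_rpow_div_rpow s hp hq hpq hl hα.le
    _ ≤ E ^ (1 - α⁻¹) * (S * M) ^ α⁻¹ := by
        gcongr
        · exact Finset.sum_nonneg fun i _ ↦ mul_nonneg (hratio i) (hl i)
        · rw [Finset.sum_mul]
          exact Finset.sum_le_sum fun i hi ↦ mul_le_mul_of_nonneg_left (hM i hi) (hratio i)
    _ = (S ^ (α - 1)⁻¹ * E) ^ ((α - 1) / α) * M ^ α⁻¹ := by
        rw [mul_rpow (rpow_nonneg hS _) hE, ← rpow_mul hS, mul_rpow hS hM0,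
          show (α - 1)⁻¹ * ((α - 1) / α) = α⁻¹ by field_simp,
          show 1 - α⁻¹ = (α - 1) / α by field_simp]
        ring

end Real

theorem stmt7_general
    {X Y : Type*} [Fintype X] [Nonempty X] [Fintype Y] [Nonempty Y]
    (DT D : X → Y → ℝ)
    (hDTnonneg : ∀ x y, 0 ≤ DT x y)
    (hDnonneg : ∀ x y, 0 ≤ D x y)
    (hsupp : ∀ x y, 0 < DT x y → 0 < D x y)
    (h : X → ℝ) (yval : Y → ℝ)
    (L : ℝ → ℝ → ℝ)
    (hLnonneg : ∀ a b, 0 ≤ L a b)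
    (M : ℝ)
    (hM : ∀ x y, L (h x) (yval y) ≤ M)
    (α : ℝ) (hα : 1 < α) :
    expLoss L yval DT h ≤
      (renyi α DT D * expLoss L yval D h) ^ ((α - 1) / α) * M ^ (α⁻¹) := by
  have hM0 : 0 ≤ M := (hLnonneg _ _).trans (hM (Classical.arbitrary X) (Classical.arbitrary Y))
  simp only [expLoss, renyi, ← Fintype.sum_prod_type']
  exact Real.sum_mul_le_renyi_mul_sum_mul_rpow Finset.univ (fun z ↦ hDTnonneg z.1 z.2)
    (fun z ↦ hDnonneg z.1 z.2) (fun z ↦ hsupp z.1 z.2) (fun _ ↦ hLnonneg _ _) hM0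
    (fun z _ ↦ hM z.1 z.2) hα

/-- Hölder-inequality step: for distributions `D_T, D` with `D > 0` on the support of
`D_T`, a hypothesis with `L(h(x), y) ≤ M`, and `α > 1`,
`𝓛(D_T, h) ≤ [d_α(D_T ∥ D) 𝓛(D, h)]^{(α−1)/α} M^{1/α}`. -/
theorem stmt7
    {X Y : Type*} [Fintype X] [Nonempty X] [Fintype Y] [Nonempty Y]
    (DT D : X → Y → ℝ)
    (hDTnonneg : ∀ x y, 0 ≤ DT x y)
    (hDTsum : ∑ x, ∑ y, DT x y = 1)
    (hDnonneg : ∀ x y, 0 ≤ D x y)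
    (hDsum : ∑ x, ∑ y, D x y = 1)
    (hsupp : ∀ x y, 0 < DT x y → 0 < D x y)
    (h : X → ℝ) (yval : Y → ℝ)
    (L : ℝ → ℝ → ℝ)
    (hLnonneg : ∀ a b, 0 ≤ L a b)
    (M : ℝ)
    (hM : ∀ x y, L (h x) (yval y) ≤ M)
    (α : ℝ) (hα : 1 < α) :
    expLoss L yval DT h ≤
      (renyi α DT D * expLoss L yval D h) ^ ((α - 1) / α) * M ^ (α⁻¹) :=
  stmt7_general DT D hDTnonneg hDnonneg hsupp h yval L hLnonneg M hM α hα
end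

section
/- Assume all source domains share the same conditional distribution of labels, 𝓛(D_k, h_k) ≤ ε for each k, and (1/p) Σ_{k=1}^p Σ_{(x,y)} D_k(y|x) 𝒰(x) L(h_k(x), y) ≤ M. Then for every z ∈ Δ and η > 0, the self-weighted loss satisfies 𝓛(D_z, h_z^η) = Σ_{k=1}^p z_k 𝓛(D_k, h_z^η) ≤ ε + η M. -/
open Finset Real

/-! Under shared conditionals the `D_z`-density at `(x, y)` is `(Σ_k z_k 𝒟_k(x)) Q(y|x)`, while
`h_z^η(x)` is a convex combination of the `h_k(x)` with weights proportional to
`z_k 𝒟_k(x) + η 𝒰(x)/p`. Jensen's inequality for `L(·, y)` therefore bounds the pointwise loss by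
`Σ_k (z_k 𝒟_k(x) + η 𝒰(x)/p) Q(y|x) L(h_k(x), y)`, the normalising factor
`Σ_k z_k 𝒟_k(x) / (Σ_k z_k 𝒟_k(x) + η 𝒰(x))` being at most one. Summing over `(x, y)`, the first
part gives `Σ_k z_k 𝓛(D_k, h_k) ≤ ε` and the second `η M`. -/

theorem expLoss_mix {X Y ι : Type*} [Fintype X] [Fintype Y] [Fintype ι]
    (L : ℝ → ℝ → ℝ) (yval : Y → ℝ) (D : ι → X → Y → ℝ) (z : ι → ℝ) (g : X → ℝ) :
    expLoss L yval (fun x y => ∑ k, z k * D k x y) g = ∑ k, z k * expLoss L yval (D k) g := by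
  simp only [expLoss, mul_sum, sum_mul, mul_assoc]
  exact sum_comm_cycle

theorem unif_pos (X : Type*) [Fintype X] [Nonempty X] : 0 < unif X :=
  inv_pos.2 (Nat.cast_pos.2 Fintype.card_pos)

theorem ConvexOn.sum_mul_map_smoothed_le {ι : Type*} [Fintype ι] [Nonempty ι] {f : ℝ → ℝ}
    (hf : ConvexOn ℝ Set.univ f) {a v : ι → ℝ} (ha : ∀ i, 0 ≤ a i) (hfv : ∀ i, 0 ≤ f (v i))
    {c : ℝ} (hc : 0 < c) :
    (∑ i, a i) * f (∑ i, (a i + c / Fintype.card ι) / (∑ j, a j + c) * v i) ≤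
      ∑ i, (a i + c / Fintype.card ι) * f (v i) := by
  set S := ∑ i, a i
  have hS : 0 ≤ S := sum_nonneg fun i _ => ha i
  have hden : 0 < S + c := by positivity
  have hn : (Fintype.card ι : ℝ) ≠ 0 := Nat.cast_ne_zero.2 Fintype.card_ne_zero
  have hsmooth_nonneg : ∀ i, 0 ≤ a i + c / Fintype.card ι := fun i => by
    have := ha i; positivity
  have hw_sum : ∑ i, (a i + c / Fintype.card ι) / (S + c) = 1 := by
    rw [← sum_div, sum_add_distrib, sum_const, card_univ, nsmul_eq_mul,
      mul_div_cancel₀ _ hn, div_self hden.ne']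
  have jensen := hf.map_sum_le (t := univ) (fun i _ => div_nonneg (hsmooth_nonneg i) hden.le)
    hw_sum (p := v) fun i _ => Set.mem_univ _
  simp only [smul_eq_mul] at jensen
  calc S * f (∑ i, (a i + c / Fintype.card ι) / (S + c) * v i)
      ≤ S * ∑ i, (a i + c / Fintype.card ι) / (S + c) * f (v i) :=
        mul_le_mul_of_nonneg_left jensen hS
    _ = S / (S + c) * ∑ i, (a i + c / Fintype.card ι) * f (v i) := by
        simp only [mul_sum]
        exact sum_congr rfl fun i _ => by ring
    _ ≤ ∑ i, (a i + c / Fintype.card ι) * f (v i) :=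
        mul_le_of_le_one_left (sum_nonneg fun i _ => mul_nonneg (hsmooth_nonneg i) (hfv i))
          ((div_le_one hden).2 (le_add_of_nonneg_right hc.le))

section SharedConditionals

variable {X Y : Type*} [Fintype X] [Fintype Y] {p : ℕ} [NeZero p]
  {D : Fin p → X → Y → ℝ} {Q : X → Y → ℝ} {L : ℝ → ℝ → ℝ}
  (h : Fin p → X → ℝ) (yval : Y → ℝ) {z : Fin p → ℝ} {η : ℝ}

theorem mix_mul_loss_combRule_le (hDnonneg : ∀ k x y, 0 ≤ D k x y)
    (hQnonneg : ∀ x y, 0 ≤ Q x y) (hshared : ∀ k x y, D k x y = marginal (D k) x * Q x y)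
    (hLnonneg : ∀ a b, 0 ≤ L a b) (hLconv : ∀ b, ConvexOn ℝ Set.univ fun a => L a b)
    (hz : ∀ k, 0 ≤ z k) (hη : 0 < η) (x : X) (y : Y) :
    (∑ k, z k * D k x y) * L (combRule D h η z x) (yval y) ≤
      ∑ k, (z k * marginal (D k) x + η * unif X / p) * (Q x y * L (h k x) (yval y)) := by
  have : Nonempty X := ⟨x⟩
  have hmix : ∑ k, z k * D k x y = (∑ k, z k * marginal (D k) x) * Q x y := by
    rw [sum_mul]
    exact sum_congr rfl fun k _ => by rw [hshared, mul_assoc]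
  have jensen := (hLconv (yval y)).sum_mul_map_smoothed_le
    (a := fun k => z k * marginal (D k) x) (v := fun k => h k x)
    (fun k => mul_nonneg (hz k) (sum_nonneg fun y _ => hDnonneg k x y))
    (fun _ => hLnonneg _ _) (mul_pos hη (unif_pos X))
  simp only [Fintype.card_fin] at jensen
  calc (∑ k, z k * D k x y) * L (combRule D h η z x) (yval y)
      = Q x y * ((∑ k, z k * marginal (D k) x) * L (combRule D h η z x) (yval y)) := by
        rw [hmix]; ring
    _ ≤ Q x y * ∑ k, (z k * marginal (D k) x + η * unif X / p) * L (h k x) (yval y) :=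
        mul_le_mul_of_nonneg_left jensen (hQnonneg x y)
    _ = _ := by
        rw [mul_sum]
        exact sum_congr rfl fun k _ => by ring

theorem expLoss_mix_combRule_le (hDnonneg : ∀ k x y, 0 ≤ D k x y)
    (hQnonneg : ∀ x y, 0 ≤ Q x y) (hshared : ∀ k x y, D k x y = marginal (D k) x * Q x y)
    (hLnonneg : ∀ a b, 0 ≤ L a b) (hLconv : ∀ b, ConvexOn ℝ Set.univ fun a => L a b)
    (hz : ∀ k, 0 ≤ z k) (hη : 0 < η) :
    expLoss L yval (fun x y => ∑ k, z k * D k x y) (combRule D h η z) ≤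
      ∑ k, z k * expLoss L yval (D k) (h k) +
        η * ((1 / (p : ℝ)) * ∑ k, ∑ x, ∑ y, Q x y * unif X * L (h k x) (yval y)) := by
  calc expLoss L yval (fun x y => ∑ k, z k * D k x y) (combRule D h η z)
      ≤ ∑ x, ∑ y, ∑ k, (z k * marginal (D k) x + η * unif X / p) *
          (Q x y * L (h k x) (yval y)) :=
        sum_le_sum fun x _ => sum_le_sum fun y _ =>
          mix_mul_loss_combRule_le h yval hDnonneg hQnonneg hshared hLnonneg hLconv hz hη x y
    _ = _ := by
        simp only [expLoss, hshared, mul_sum, ← sum_add_distrib]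
        rw [sum_comm_cycle]
        refine sum_congr rfl fun k _ => sum_congr rfl fun x _ => sum_congr rfl fun y _ => ?_
        ring

end SharedConditionals

theorem stmt8_general
    {X Y : Type*} [Fintype X] [Fintype Y]
    {p : ℕ}
    (D : Fin p → X → Y → ℝ)
    (hDnonneg : ∀ k x y, 0 ≤ D k x y)
    (h : Fin p → X → ℝ) (yval : Y → ℝ)
    (L : ℝ → ℝ → ℝ)
    (hLnonneg : ∀ a b, 0 ≤ L a b)
    (hLconv : ∀ b, ConvexOn ℝ Set.univ fun a => L a b)
    -- shared conditional distribution of labels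
    (Q : X → Y → ℝ)
    (hQnonneg : ∀ x y, 0 ≤ Q x y)
    (hshared : ∀ k x y, D k x y = marginal (D k) x * Q x y)
    (ε M : ℝ)
    (hε : ∀ k, expLoss L yval (D k) (h k) ≤ ε)
    (hM : (1 / (p : ℝ)) * ∑ k : Fin p, ∑ x, ∑ y, Q x y * unif X * L (h k x) (yval y) ≤ M) :
    ∀ z ∈ stdSimplex ℝ (Fin p), ∀ η > (0 : ℝ),
      expLoss L yval (fun x y => ∑ k, z k * D k x y) (combRule D h η z) =
          ∑ k, z k * expLoss L yval (D k) (combRule D h η z) ∧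
        expLoss L yval (fun x y => ∑ k, z k * D k x y) (combRule D h η z) ≤
          ε + η * M := by
  intro z ⟨hz_nonneg, hz_sum⟩ η hη
  obtain ⟨k₀, -, -⟩ := exists_ne_zero_of_sum_ne_zero (hz_sum ▸ one_ne_zero)
  have : NeZero p := ⟨k₀.pos.ne'⟩
  refine ⟨expLoss_mix L yval D z _, ?_⟩
  calc expLoss L yval (fun x y => ∑ k, z k * D k x y) (combRule D h η z)
      ≤ ∑ k, z k * expLoss L yval (D k) (h k) +
          η * ((1 / (p : ℝ)) * ∑ k, ∑ x, ∑ y, Q x y * unif X * L (h k x) (yval y)) :=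
        expLoss_mix_combRule_le h yval hDnonneg hQnonneg hshared hLnonneg hLconv hz_nonneg hη
    _ ≤ ∑ k, z k * ε + η * M := by
        gcongr with k
        · exact hz_nonneg k
        · exact hε k
    _ = ε + η * M := by rw [← sum_mul, hz_sum, one_mul]

/-- Self-weighted loss bound: under shared conditionals, per-domain loss at most `ε`,
and average uniform loss at most `M`, for every `z ∈ Δ` and `η > 0`,
`𝓛(D_z, h_z^η) = Σ_k z_k 𝓛(D_k, h_z^η) ≤ ε + η M`. -/
theorem stmt8
    {X Y : Type*} [Fintype X] [Nonempty X] [Fintype Y] [Nonempty Y]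
    {p : ℕ} (hp : 0 < p)
    (D : Fin p → X → Y → ℝ)
    (hDnonneg : ∀ k x y, 0 ≤ D k x y)
    (hDsum : ∀ k, ∑ x, ∑ y, D k x y = 1)
    (h : Fin p → X → ℝ) (yval : Y → ℝ)
    (L : ℝ → ℝ → ℝ)
    (hLnonneg : ∀ a b, 0 ≤ L a b)
    (hLconv : ∀ b, ConvexOn ℝ Set.univ fun a => L a b)
    (hLcont : Continuous fun q : ℝ × ℝ => L q.1 q.2)
    -- shared conditional distribution of labels
    (Q : X → Y → ℝ)
    (hQnonneg : ∀ x y, 0 ≤ Q x y)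
    (hQsum : ∀ x, ∑ y, Q x y = 1)
    (hshared : ∀ k x y, D k x y = marginal (D k) x * Q x y)
    (ε M : ℝ)
    (hε : ∀ k, expLoss L yval (D k) (h k) ≤ ε)
    (hM : (1 / (p : ℝ)) * ∑ k : Fin p, ∑ x, ∑ y, Q x y * unif X * L (h k x) (yval y) ≤ M) :
    ∀ z ∈ stdSimplex ℝ (Fin p), ∀ η > (0 : ℝ),
      expLoss L yval (fun x y => ∑ k, z k * D k x y) (combRule D h η z) =
          ∑ k, z k * expLoss L yval (D k) (combRule D h η z) ∧
        expLoss L yval (fun x y => ∑ k, z k * D k x y) (combRule D h η z) ≤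
          ε + η * M :=
  stmt8_general D hDnonneg h yval L hLnonneg hLconv Q hQnonneg hshared ε M hε hM
end

section
/- Fix α > 1 and k ∈ [p]. Assume 𝓛(D_k, h_k) ≤ ε and L(h_k(x),y) ≤ M for all (x,y), and let D̂_k be any probability distribution on 𝒳 × 𝒴 with D_k(x,y) > 0 wherever D̂_k(x,y) > 0. Then 𝓛(D̂_k, h_k) ≤ [ε · d_α(D̂_k ∥ D_k)]^{(α−1)/α} · M^{1/α}. -/
open Finset Real

/-! Writing `D̂ L = (D̂ / D ^ (1/q)) · (D ^ (1/q) L)` with `q = α / (α - 1)`, Hölder's inequality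
with exponents `α` and `q` bounds `𝓛(D̂, h)` by `(∑ D̂ ^ α / D ^ (α - 1)) ^ (1/α)` times
`(∑ D L ^ q) ^ (1/q)`, and `L ≤ M` gives `∑ D L ^ q ≤ M ^ (q - 1) ∑ D L ≤ M ^ (q - 1) ε`. -/

theorem rpow_le_mul_rpow_sub_one {a M q : ℝ} (ha : 0 ≤ a) (haM : a ≤ M) (hq : 1 ≤ q) :
    a ^ q ≤ a * M ^ (q - 1) := by
  calc a ^ q = a * a ^ (q - 1) := by
        rw [← rpow_one_add' ha (by linarith), add_sub_cancel]
    _ ≤ a * M ^ (q - 1) := by gcongr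

section
variable {ι : Type*} (s : Finset ι) {P Q u : ι → ℝ}

theorem inner_le_Lp_div_mul_weighted_Lq {p q : ℝ} (hpq : p.HolderConjugate q)
    (hP : ∀ i ∈ s, 0 ≤ P i) (hQ : ∀ i ∈ s, 0 ≤ Q i) (hu : ∀ i ∈ s, 0 ≤ u i)
    (hsupp : ∀ i ∈ s, 0 < P i → 0 < Q i) :
    ∑ i ∈ s, P i * u i ≤
      (∑ i ∈ s, P i ^ p / Q i ^ (p - 1)) ^ (1 / p) * (∑ i ∈ s, Q i * u i ^ q) ^ (1 / q) := by
  have hcp : q⁻¹ * p = p - 1 := by rw [inv_mul_eq_div, hpq.div_conj_eq_sub_one]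
  have hcq : q⁻¹ * q = 1 := inv_mul_cancel₀ hpq.symm.pos.ne'
  have hprod : ∀ i ∈ s, P i / Q i ^ q⁻¹ * (Q i ^ q⁻¹ * u i) = P i * u i := by
    intro i hi
    rcases (hP i hi).eq_or_lt with hPi | hPi
    · simp [← hPi]
    · have hQc := (rpow_pos_of_pos (hsupp i hi hPi) q⁻¹).ne'
      rw [div_mul_eq_mul_div, mul_div_assoc, mul_div_cancel_left₀ _ hQc]
  calc ∑ i ∈ s, P i * u i = ∑ i ∈ s, P i / Q i ^ q⁻¹ * (Q i ^ q⁻¹ * u i) :=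
        (sum_congr rfl hprod).symm
    _ ≤ (∑ i ∈ s, (P i / Q i ^ q⁻¹) ^ p) ^ (1 / p) * (∑ i ∈ s, (Q i ^ q⁻¹ * u i) ^ q) ^ (1 / q) :=
        inner_le_Lp_mul_Lq_of_nonneg s hpq
          (fun i hi => div_nonneg (hP i hi) (rpow_nonneg (hQ i hi) _))
          (fun i hi => mul_nonneg (rpow_nonneg (hQ i hi) _) (hu i hi))
    _ = (∑ i ∈ s, P i ^ p / Q i ^ (p - 1)) ^ (1 / p) * (∑ i ∈ s, Q i * u i ^ q) ^ (1 / q) := by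
        congr 2 <;> refine sum_congr rfl fun i hi => ?_
        · rw [div_rpow (hP i hi) (rpow_nonneg (hQ i hi) _), ← rpow_mul (hQ i hi), hcp]
        · rw [mul_rpow (rpow_nonneg (hQ i hi) _) (hu i hi), ← rpow_mul (hQ i hi), hcq, rpow_one]

theorem sum_mul_le_of_sum_mul_le {α ε M : ℝ} (hα : 1 < α) (hM0 : 0 ≤ M)
    (hP : ∀ i ∈ s, 0 ≤ P i) (hQ : ∀ i ∈ s, 0 ≤ Q i) (hu : ∀ i ∈ s, 0 ≤ u i)
    (huM : ∀ i ∈ s, u i ≤ M) (hsupp : ∀ i ∈ s, 0 < P i → 0 < Q i)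
    (hε : ∑ i ∈ s, Q i * u i ≤ ε) :
    ∑ i ∈ s, P i * u i ≤
      (ε * (∑ i ∈ s, P i ^ α / Q i ^ (α - 1)) ^ (α - 1)⁻¹) ^ ((α - 1) / α) * M ^ α⁻¹ := by
  set q := conjExponent α
  have hpq : α.HolderConjugate q := .conjExponent hα
  set S := ∑ i ∈ s, P i ^ α / Q i ^ (α - 1)
  have hS : 0 ≤ S := sum_nonneg fun i hi =>
    div_nonneg (rpow_nonneg (hP i hi) _) (rpow_nonneg (hQ i hi) _)
  have hε0 : 0 ≤ ε := (sum_nonneg fun i hi => mul_nonneg (hQ i hi) (hu i hi)).trans hε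
  have hLq : ∑ i ∈ s, Q i * u i ^ q ≤ M ^ (q - 1) * ε := by
    refine le_trans ?_ (mul_le_mul_of_nonneg_left hε (rpow_nonneg hM0 _))
    rw [mul_sum]
    refine sum_le_sum fun i hi => ?_
    calc Q i * u i ^ q ≤ Q i * (u i * M ^ (q - 1)) := by
          gcongr
          · exact hQ i hi
          · exact rpow_le_mul_rpow_sub_one (hu i hi) (huM i hi) hpq.symm.lt.le
      _ = M ^ (q - 1) * (Q i * u i) := by ring
  calc ∑ i ∈ s, P i * u i ≤ S ^ (1 / α) * (∑ i ∈ s, Q i * u i ^ q) ^ (1 / q) :=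
        inner_le_Lp_div_mul_weighted_Lq s hpq hP hQ hu hsupp
    _ ≤ S ^ (1 / α) * (M ^ (q - 1) * ε) ^ (1 / q) := by
        gcongr
        · exact sum_nonneg fun i hi => mul_nonneg (hQ i hi) (rpow_nonneg (hu i hi) _)
        · exact one_div_nonneg.2 hpq.symm.pos.le
    _ = (ε * S ^ (α - 1)⁻¹) ^ ((α - 1) / α) * M ^ α⁻¹ := by
        have hα0 : α ≠ 0 := hpq.pos.ne'
        have hα1 : α - 1 ≠ 0 := hpq.sub_one_ne_zero
        have hq : q = α / (α - 1) := hpq.conjugate_eq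
        have e1 : (q - 1) * (1 / q) = α⁻¹ := by rw [hq]; field_simp; ring
        have e2 : 1 / q = (α - 1) / α := by rw [hq, one_div_div]
        have e3 : (α - 1)⁻¹ * ((α - 1) / α) = 1 / α := by field_simp
        rw [mul_rpow (rpow_nonneg hM0 _) hε0, mul_rpow hε0 (rpow_nonneg hS _), ← rpow_mul hM0,
          ← rpow_mul hS, e1, e2, e3]
        ring
end

theorem stmt10_general
    {X Y : Type*} [Fintype X] [Nonempty X] [Fintype Y] [Nonempty Y]
    (α : ℝ) (hα : 1 < α)
    (Dk : X → Y → ℝ)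
    (hDknonneg : ∀ x y, 0 ≤ Dk x y)
    (Dhat : X → Y → ℝ)
    (hDhatnonneg : ∀ x y, 0 ≤ Dhat x y)
    (hsupp : ∀ x y, 0 < Dhat x y → 0 < Dk x y)
    (hk : X → ℝ) (yval : Y → ℝ)
    (L : ℝ → ℝ → ℝ)
    (hLnonneg : ∀ a b, 0 ≤ L a b)
    (ε M : ℝ)
    (hε : expLoss L yval Dk hk ≤ ε)
    (hM : ∀ x y, L (hk x) (yval y) ≤ M) :
    expLoss L yval Dhat hk ≤ (ε * renyi α Dhat Dk) ^ ((α - 1) / α) * M ^ (α⁻¹) := by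
  obtain ⟨x₀⟩ := ‹Nonempty X›
  obtain ⟨y₀⟩ := ‹Nonempty Y›
  simp only [expLoss, renyi, ← Fintype.sum_prod_type'] at hε ⊢
  exact sum_mul_le_of_sum_mul_le univ (P := fun i : X × Y => Dhat i.1 i.2)
    (Q := fun i : X × Y => Dk i.1 i.2)
    hα ((hLnonneg _ _).trans (hM x₀ y₀)) (fun i _ => hDhatnonneg _ _) (fun i _ => hDknonneg _ _)
    (fun i _ => hLnonneg _ _) (fun i _ => hM _ _) (fun i _ => hsupp _ _) hε

/-- Key step for estimate distributions: if `𝓛(D_k, h_k) ≤ ε`, `L(h_k(x), y) ≤ M`, and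
`D_k > 0` on the support of `D̂_k`, then
`𝓛(D̂_k, h_k) ≤ [ε d_α(D̂_k ∥ D_k)]^{(α−1)/α} M^{1/α}`. -/
theorem stmt10
    {X Y : Type*} [Fintype X] [Nonempty X] [Fintype Y] [Nonempty Y]
    (α : ℝ) (hα : 1 < α)
    (Dk : X → Y → ℝ)
    (hDknonneg : ∀ x y, 0 ≤ Dk x y)
    (hDksum : ∑ x, ∑ y, Dk x y = 1)
    (Dhat : X → Y → ℝ)
    (hDhatnonneg : ∀ x y, 0 ≤ Dhat x y)
    (hDhatsum : ∑ x, ∑ y, Dhat x y = 1)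
    (hsupp : ∀ x y, 0 < Dhat x y → 0 < Dk x y)
    (hk : X → ℝ) (yval : Y → ℝ)
    (L : ℝ → ℝ → ℝ)
    (hLnonneg : ∀ a b, 0 ≤ L a b)
    (ε M : ℝ)
    (hε : expLoss L yval Dk hk ≤ ε)
    (hM : ∀ x y, L (hk x) (yval y) ≤ M) :
    expLoss L yval Dhat hk ≤ (ε * renyi α Dhat Dk) ^ ((α - 1) / α) * M ^ (α⁻¹) :=
  stmt10_general α hα Dk hDknonneg Dhat hDhatnonneg hsupp hk yval L hLnonneg ε M hε hM
end
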